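/- Let β^(4) = (β_{ij})_{0≤i+j≤4} be a real sequence with β₀₀ = 1 and with positive definite 6×6 moment matrix M(2). Then there exists a degree-one transformation Ψ(x,y) = (a+bx+cy, d+ex+fy) with bf − ce ≠ 0 such that the transformed sequence β̃_{ij} := L_β(Ψ₁^i Ψ₂^j) satisfies β̃₀₀ = 1, β̃₁₀ = β̃₀₁ = β̃₁₁ = 0, β̃₂₀ = β̃₀₂ = 1; that is, the 3×3 submatrix M̃(1) of the transformed moment matrix M̃(2) is the identity matrix (and M̃(2) is still positive definite). -/

import Mathlib

/-- Index set for the moment matrix of degree `n`: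
pairs `(i,j)` of nonnegative integers with `i + j ≤ n`. -/
abbrev MIdx (n : ℕ) := {ij : Fin (n+1) × Fin (n+1) // (ij.1 : ℕ) + (ij.2 : ℕ) ≤ n}

/-- The moment matrix `M(n)` of a real sequence `β = (β_{ij})`:
`M(n)[(i,j),(k,l)] = β_{i+k, j+l}`. -/
def momentMatrix (n : ℕ) (β : ℕ → ℕ → ℝ) : Matrix (MIdx n) (MIdx n) ℝ :=
  fun p q => β ((p.val.1 : ℕ) + (q.val.1 : ℕ)) ((p.val.2 : ℕ) + (q.val.2 : ℕ))
open MvPolynomial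

/-- The Riesz functional of a sequence `β`: `L_β(Σ p_{ij} x^i y^j) = Σ p_{ij} β_{ij}`. -/
noncomputable def riesz (β : ℕ → ℕ → ℝ) (p : MvPolynomial (Fin 2) ℝ) : ℝ :=
  ∑ m ∈ p.support, p.coeff m * β (m 0) (m 1)

/-- The sequence transformed by the degree-one map
`Ψ(x,y) = (a + bx + cy, d + ex + fy)`:  `β̃_{ij} := L_β(Ψ₁^i Ψ₂^j)`. -/
noncomputable def transSeq (β : ℕ → ℕ → ℝ) (a b c d e f : ℝ) (i j : ℕ) : ℝ :=
  riesz β ((C a + C b * X 0 + C c * X 1) ^ i * (C d + C e * X 0 + C f * X 1) ^ j)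

open scoped Matrix

/-!
`M(n)` is the Gram matrix, in the monomial basis, of the bilinear form `(p, q) ↦ L_β(p q)` on
polynomials of degree `≤ n`, and `L_β̃(p) = L_β(p ∘ Ψ)`. Composition with an invertible affine
map `Ψ` is an injective linear map of that space into itself, so `M̃(n)` is again positive
definite. The upper-left block `M̃(1)` is the Gram matrix of `1, Ψ₁, Ψ₂`: centring `Ψ₁, Ψ₂`
(giving them mean `0`) leaves the task of whitening the `2 × 2` covariance matrix of `(x, y)`,
which is positive definite because `M(2)` is, and Gram–Schmidt does that.
-/

theorem totalDegree_aeval_le {σ τ R : Type*} [CommSemiring R] {g : σ → MvPolynomial τ R}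
    (hg : ∀ i, (g i).totalDegree ≤ 1) (p : MvPolynomial σ R) :
    (aeval g p).totalDegree ≤ p.totalDegree := by
  conv_lhs => rw [p.as_sum, map_sum]
  refine totalDegree_finsetSum_le fun m hm => ?_
  rw [aeval_monomial, algebraMap_eq]
  refine (totalDegree_mul _ _).trans ?_
  rw [totalDegree_C, zero_add]
  refine (totalDegree_finsetProd _ _).trans (le_trans ?_ (le_totalDegree hm))
  refine Finset.sum_le_sum fun i _ => (totalDegree_pow _ _).trans ?_
  simpa using Nat.mul_le_mul_left (m i) (hg i)

section AffineSubstitution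

variable {K : Type*} [Field K]

noncomputable def affinePoly (x y z : K) : MvPolynomial (Fin 2) K := C x + C y * X 0 + C z * X 1

noncomputable def affineSubst (a b c d e f : K) :
    MvPolynomial (Fin 2) K →ₐ[K] MvPolynomial (Fin 2) K :=
  aeval ![affinePoly a b c, affinePoly d e f]

theorem affinePoly_eq_zero_iff {x y z : K} : affinePoly x y z = 0 ↔ x = 0 ∧ y = 0 ∧ z = 0 := by
  refine ⟨fun h => ?_, fun ⟨hx, hy, hz⟩ => by simp [affinePoly, hx, hy, hz]⟩
  have h00 := congrArg (eval (![0, 0] : Fin 2 → K)) h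
  have h10 := congrArg (eval (![1, 0] : Fin 2 → K)) h
  have h01 := congrArg (eval (![0, 1] : Fin 2 → K)) h
  simp only [affinePoly, map_add, map_mul, eval_C, eval_X, map_zero, Matrix.cons_val_zero,
    Matrix.cons_val_one, Matrix.cons_val_fin_one, mul_zero, mul_one, add_zero] at h00 h10 h01
  exact ⟨h00, by linear_combination h10 - h00, by linear_combination h01 - h00⟩

theorem totalDegree_affinePoly_le (x y z : K) : (affinePoly x y z).totalDegree ≤ 1 := by
  refine (totalDegree_add _ _).trans (max_le ((totalDegree_add _ _).trans (max_le ?_ ?_)) ?_)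
  · simp
  all_goals exact (totalDegree_mul _ _).trans (by simp [totalDegree_X])

theorem affinePoly_zero_one_zero : affinePoly (0 : K) 1 0 = X 0 := by simp [affinePoly]

theorem affinePoly_zero_zero_one : affinePoly (0 : K) 0 1 = X 1 := by simp [affinePoly]

theorem affineSubst_affinePoly (a b c d e f x y z : K) :
    affineSubst a b c d e f (affinePoly x y z) =
      affinePoly (x + y * a + z * d) (y * b + z * e) (y * c + z * f) := by
  simp only [affineSubst, affinePoly, map_add, map_mul, aeval_C, aeval_X, algebraMap_eq]
  simp only [Matrix.cons_val_zero, Matrix.cons_val_one]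
  ring

theorem affineSubst_injective {a b c d e f : K} (hD : b * f - c * e ≠ 0) :
    Function.Injective (affineSubst a b c d e f) := by
  generalize hDdef : b * f - c * e = D at hD
  set inv := affineSubst ((c * d - f * a) / D) (f / D) (-c / D) ((e * a - b * d) / D) (-e / D)
    (b / D)
  have hinv : inv.comp (affineSubst a b c d e f) = AlgHom.id K _ := by
    refine algHom_ext (Fin.forall_fin_two.2 ⟨?_, ?_⟩)
    · rw [AlgHom.comp_apply, AlgHom.id_apply, ← affinePoly_zero_one_zero, affineSubst_affinePoly,
        affineSubst_affinePoly]
      congr 1 <;> field_simp <;> rw [← hDdef] <;> ring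
    · rw [AlgHom.comp_apply, AlgHom.id_apply, ← affinePoly_zero_zero_one, affineSubst_affinePoly,
        affineSubst_affinePoly]
      congr 1 <;> field_simp <;> rw [← hDdef] <;> ring
  exact Function.LeftInverse.injective (g := inv) fun p => by
    rw [← AlgHom.comp_apply, hinv, AlgHom.id_apply]

theorem totalDegree_affineSubst_le (a b c d e f : K) (p : MvPolynomial (Fin 2) K) :
    (affineSubst a b c d e f p).totalDegree ≤ p.totalDegree :=
  totalDegree_aeval_le
    (Fin.forall_fin_two.2 ⟨totalDegree_affinePoly_le a b c, totalDegree_affinePoly_le d e f⟩) p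

end AffineSubstitution

section MomentIndex

variable {n : ℕ} {R : Type*} [CommSemiring R]

noncomputable def idxExponent (q : MIdx n) : Fin 2 →₀ ℕ :=
  Finsupp.single 0 (q.1.1 : ℕ) + Finsupp.single 1 (q.1.2 : ℕ)

@[simp] theorem idxExponent_apply_zero (q : MIdx n) : idxExponent q 0 = q.1.1 := by
  simp [idxExponent]

@[simp] theorem idxExponent_apply_one (q : MIdx n) : idxExponent q 1 = q.1.2 := by
  simp [idxExponent]

theorem idxExponent_injective : Function.Injective (idxExponent (n := n)) := by
  intro p q h
  have h0 := DFunLike.congr_fun h 0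
  have h1 := DFunLike.congr_fun h 1
  simp only [idxExponent_apply_zero, idxExponent_apply_one] at h0 h1
  exact Subtype.ext (Prod.ext (Fin.ext h0) (Fin.ext h1))

theorem Finsupp.sum_id_fin_two (m : Fin 2 →₀ ℕ) : (m.sum fun _ e => e) = m 0 + m 1 := by
  rw [Finsupp.sum_fintype _ _ fun _ => rfl, Fin.sum_univ_two]

theorem exists_idxExponent_eq {m : Fin 2 →₀ ℕ} (hm : m 0 + m 1 ≤ n) :
    ∃ q : MIdx n, idxExponent q = m :=
  ⟨⟨(⟨m 0, by omega⟩, ⟨m 1, by omega⟩), hm⟩, by ext i; fin_cases i <;> simp⟩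

noncomputable def polyOfVec (v : MIdx n → R) : MvPolynomial (Fin 2) R :=
  ∑ q, monomial (idxExponent q) (v q)

theorem coeff_idxExponent_polyOfVec (v : MIdx n → R) (q : MIdx n) :
    coeff (idxExponent q) (polyOfVec v) = v q := by
  simp [polyOfVec, coeff_sum, coeff_monomial, idxExponent_injective.eq_iff]

theorem polyOfVec_injective : Function.Injective (polyOfVec (n := n) (R := R)) :=
  fun v w h => funext fun q => by
    rw [← coeff_idxExponent_polyOfVec v q, h, coeff_idxExponent_polyOfVec]

theorem polyOfVec_eq_zero_iff {v : MIdx n → R} : polyOfVec v = 0 ↔ v = 0 :=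
  ⟨fun h => polyOfVec_injective (h.trans (by simp [polyOfVec])), by rintro rfl; simp [polyOfVec]⟩

theorem totalDegree_polyOfVec_le (v : MIdx n → R) : (polyOfVec v).totalDegree ≤ n :=
  totalDegree_finsetSum_le fun q _ =>
    (totalDegree_monomial_le _ _).trans ((Finsupp.sum_id_fin_two _).trans_le (by simpa using q.2))

theorem exists_polyOfVec_eq {p : MvPolynomial (Fin 2) R} (hp : p.totalDegree ≤ n) :
    ∃ v : MIdx n → R, polyOfVec v = p := by
  refine ⟨fun q => coeff (idxExponent q) p, ?_⟩
  ext m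
  by_cases hm : m 0 + m 1 ≤ n
  · obtain ⟨q, rfl⟩ := exists_idxExponent_eq hm
    exact coeff_idxExponent_polyOfVec _ _
  · have hpm : coeff m p = 0 := by
      by_contra h
      have := le_totalDegree (mem_support_iff.2 h)
      rw [Finsupp.sum_id_fin_two] at this
      omega
    rw [hpm, polyOfVec, coeff_sum]
    refine Finset.sum_eq_zero fun q _ => ?_
    rw [coeff_monomial, if_neg]
    rintro rfl
    exact hm (by simpa using q.2)

end MomentIndex

section Riesz

variable (β : ℕ → ℕ → ℝ)

noncomputable def rieszLinearMap : MvPolynomial (Fin 2) ℝ →ₗ[ℝ] ℝ :=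
  Finsupp.linearCombination ℝ (fun m : Fin 2 →₀ ℕ => β (m 0) (m 1)) ∘ₗ
    (AddMonoidAlgebra.coeffLinearEquiv ℝ).toLinearMap

theorem rieszLinearMap_apply (p : MvPolynomial (Fin 2) ℝ) : rieszLinearMap β p = riesz β p := by
  simp [rieszLinearMap, riesz, Finsupp.linearCombination_apply, sum_def]

theorem riesz_add (p q : MvPolynomial (Fin 2) ℝ) : riesz β (p + q) = riesz β p + riesz β q := by
  simp only [← rieszLinearMap_apply, map_add]

theorem riesz_monomial (m : Fin 2 →₀ ℕ) (r : ℝ) : riesz β (monomial m r) = r * β (m 0) (m 1) := by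
  rw [← rieszLinearMap_apply, rieszLinearMap, LinearMap.comp_apply, LinearEquiv.coe_coe,
    AddMonoidAlgebra.coeffLinearEquiv_apply, ← single_eq_monomial, AddMonoidAlgebra.coeff_single,
    Finsupp.linearCombination_single, smul_eq_mul]

theorem riesz_one : riesz β 1 = β 0 0 := by
  rw [one_def, riesz_monomial, one_mul]
  rfl

theorem riesz_affinePoly (x y z : ℝ) :
    riesz β (affinePoly x y z) = x * β 0 0 + y * β 1 0 + z * β 0 1 := by
  simp [affinePoly, X, ← monomial_zero', riesz_add, riesz_monomial]

theorem riesz_affinePoly_mul_affinePoly (x y z x' y' z' : ℝ) :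
    riesz β (affinePoly x y z * affinePoly x' y' z') =
      x * x' * β 0 0 + (x * y' + y * x') * β 1 0 + (x * z' + z * x') * β 0 1 +
        y * y' * β 2 0 + (y * z' + z * y') * β 1 1 + z * z' * β 0 2 := by
  simp only [affinePoly, X, ← monomial_zero', add_mul, mul_add, monomial_mul,
    riesz_add, riesz_monomial]
  simp only [add_zero, zero_add, mul_one, Finsupp.coe_zero, Finsupp.coe_add, Pi.zero_apply,
    Pi.add_apply, Finsupp.single_eq_same, Finsupp.single_eq_of_ne, ne_eq, one_ne_zero,
    zero_ne_one, not_false_eq_true, Nat.reduceAdd]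
  ring

theorem dotProduct_momentMatrix_mulVec {n : ℕ} (v w : MIdx n → ℝ) :
    v ⬝ᵥ (momentMatrix n β *ᵥ w) = riesz β (polyOfVec v * polyOfVec w) := by
  simp only [polyOfVec, Finset.sum_mul_sum, monomial_mul, ← rieszLinearMap_apply, map_sum]
  simp only [rieszLinearMap_apply, riesz_monomial, dotProduct, Matrix.mulVec, momentMatrix,
    Finset.mul_sum, Finsupp.add_apply, idxExponent_apply_zero, idxExponent_apply_one]
  exact Finset.sum_congr rfl fun p _ => Finset.sum_congr rfl fun q _ => by ring

theorem momentMatrix_isHermitian (n : ℕ) : (momentMatrix n β).IsHermitian := by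
  ext p q
  simp [momentMatrix, add_comm]

theorem riesz_mul_self_pos {n : ℕ} (hpd : (momentMatrix n β).PosDef) {p : MvPolynomial (Fin 2) ℝ}
    (hp : p.totalDegree ≤ n) (hp0 : p ≠ 0) : 0 < riesz β (p * p) := by
  obtain ⟨v, rfl⟩ := exists_polyOfVec_eq hp
  simpa [dotProduct_momentMatrix_mulVec] using
    hpd.dotProduct_mulVec_pos (polyOfVec_eq_zero_iff.not.1 hp0)

end Riesz

section Transform

variable (β : ℕ → ℕ → ℝ) {a b c d e f : ℝ}

theorem transSeq_eq (i j : ℕ) :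
    transSeq β a b c d e f i j = riesz β (affinePoly a b c ^ i * affinePoly d e f ^ j) := rfl

theorem riesz_transSeq (p : MvPolynomial (Fin 2) ℝ) :
    riesz (transSeq β a b c d e f) p = riesz β (affineSubst a b c d e f p) := by
  induction p using MvPolynomial.induction_on' with
  | monomial m r =>
    rw [riesz_monomial, affineSubst, aeval_monomial, Finsupp.prod_fintype _ _ fun _ => pow_zero _,
      Fin.prod_univ_two, algebraMap_eq, ← smul_eq_C_mul, ← rieszLinearMap_apply, map_smul,
      rieszLinearMap_apply]
    rfl
  | add p q hp hq => rw [map_add, riesz_add, riesz_add, hp, hq]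

theorem posDef_momentMatrix_transSeq {n : ℕ} (hpd : (momentMatrix n β).PosDef)
    (hD : b * f - c * e ≠ 0) :
    (momentMatrix n (transSeq β a b c d e f)).PosDef := by
  refine .of_dotProduct_mulVec_pos (momentMatrix_isHermitian _ n) fun v hv => ?_
  rw [star_trivial, dotProduct_momentMatrix_mulVec, riesz_transSeq, map_mul]
  exact riesz_mul_self_pos β hpd
    ((totalDegree_affineSubst_le ..).trans (totalDegree_polyOfVec_le v))
    ((map_ne_zero_iff _ (affineSubst_injective hD)).2 (polyOfVec_eq_zero_iff.not.2 hv))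

end Transform

theorem covariance_pos_of_posDef (β : ℕ → ℕ → ℝ) (hβ00 : β 0 0 = 1)
    (hpd : (momentMatrix 2 β).PosDef) :
    0 < β 2 0 - β 1 0 ^ 2 ∧
      0 < (β 2 0 - β 1 0 ^ 2) * (β 0 2 - β 0 1 ^ 2) - (β 1 1 - β 1 0 * β 0 1) ^ 2 := by
  have hpos (x y z : ℝ) (hyz : y ≠ 0 ∨ z ≠ 0) :
      0 < riesz β (affinePoly x y z * affinePoly x y z) := by
    refine riesz_mul_self_pos β hpd ((totalDegree_affinePoly_le x y z).trans one_le_two) ?_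
    rw [Ne, affinePoly_eq_zero_iff]
    tauto
  have hvar : 0 < β 2 0 - β 1 0 ^ 2 := by
    have h := hpos (-β 1 0) 1 0 (by norm_num)
    rw [riesz_affinePoly_mul_affinePoly, hβ00] at h
    linarith
  refine ⟨hvar, (mul_pos_iff_of_pos_left hvar).1 ?_⟩
  -- `L_β((s₁₂ (x - β₁₀) - s₁₁ (y - β₀₁))²) = s₁₁ (s₁₁ s₂₂ - s₁₂²)`, `sᵢⱼ` the covariances
  have h := hpos ((β 2 0 - β 1 0 ^ 2) * β 0 1 - (β 1 1 - β 1 0 * β 0 1) * β 1 0)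
    (β 1 1 - β 1 0 * β 0 1) (-(β 2 0 - β 1 0 ^ 2)) (Or.inr (neg_ne_zero.2 hvar.ne'))
  rw [riesz_affinePoly_mul_affinePoly, hβ00] at h
  linarith

theorem exists_whitening {s₁₁ s₁₂ s₂₂ : ℝ} (h₁₁ : 0 < s₁₁) (hdet : 0 < s₁₁ * s₂₂ - s₁₂ ^ 2) :
    ∃ b c e f : ℝ, b * f - c * e ≠ 0 ∧ b * b * s₁₁ + 2 * b * c * s₁₂ + c * c * s₂₂ = 1 ∧
      b * e * s₁₁ + (b * f + c * e) * s₁₂ + c * f * s₂₂ = 0 ∧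
      e * e * s₁₁ + 2 * e * f * s₁₂ + f * f * s₂₂ = 1 := by
  obtain ⟨r, hr, rfl⟩ : ∃ r, 0 < r ∧ r ^ 2 = s₁₁ :=
    ⟨√s₁₁, Real.sqrt_pos.2 h₁₁, Real.sq_sqrt h₁₁.le⟩
  obtain ⟨q, hq, hq2⟩ : ∃ q, 0 < q ∧ q ^ 2 = r ^ 2 * s₂₂ - s₁₂ ^ 2 :=
    ⟨_, Real.sqrt_pos.2 hdet, Real.sq_sqrt hdet.le⟩
  -- the inverse of the Cholesky factor of `!![s₁₁, s₁₂; s₁₂, s₂₂]`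
  refine ⟨1 / r, 0, -s₁₂ / (r * q), r / q, ?_, ?_, ?_, ?_⟩
  · rw [zero_mul, sub_zero]
    positivity
  · field_simp
    ring
  · field_simp
    ring
  · field_simp
    linear_combination -hq2

/-- Normalization. If `β₀₀ = 1` and `M(2)` is positive definite,
there is a degree-one transformation `Ψ` making the transformed `M̃(1)` the identity:
`β̃₀₀ = 1`, `β̃₁₀ = β̃₀₁ = β̃₁₁ = 0`, `β̃₂₀ = β̃₀₂ = 1`, with `M̃(2)` still
positive definite. -/
theorem exists_degree_one_transform_normalizing
    (β : ℕ → ℕ → ℝ) (hβ00 : β 0 0 = 1)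
    (hpd : (momentMatrix 2 β).PosDef) :
    ∃ a b c d e f : ℝ, b * f - c * e ≠ 0 ∧
      transSeq β a b c d e f 0 0 = 1 ∧
      transSeq β a b c d e f 1 0 = 0 ∧
      transSeq β a b c d e f 0 1 = 0 ∧
      transSeq β a b c d e f 1 1 = 0 ∧
      transSeq β a b c d e f 2 0 = 1 ∧
      transSeq β a b c d e f 0 2 = 1 ∧
      (momentMatrix 2 (transSeq β a b c d e f)).PosDef := by
  obtain ⟨hvar, hdet⟩ := covariance_pos_of_posDef β hβ00 hpd
  obtain ⟨b, c, e, f, hD, h₁₁, h₁₂, h₂₂⟩ := exists_whitening hvar hdet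
  refine ⟨-(b * β 1 0 + c * β 0 1), b, c, -(e * β 1 0 + f * β 0 1), e, f, hD, ?_, ?_, ?_, ?_, ?_,
    ?_, posDef_momentMatrix_transSeq β hpd hD⟩
  all_goals
    simp only [transSeq_eq, pow_zero, pow_one, sq, mul_one, one_mul, riesz_one, riesz_affinePoly,
      riesz_affinePoly_mul_affinePoly, hβ00]
  · ring
  · ring
  · linear_combination h₁₂
  · linear_combination h₁₁
  · linear_combination h₂₂
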